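/- There exists a primitive element of F(x,y) with exponent sum pair (X, Y) if and only if X and Y are relatively prime integers. -/

import Mathlib

abbrev F2 := FreeGroup (Fin 2)

/-- The generator `x` of the free group of rank 2. -/
def xg : F2 := FreeGroup.of 0

/-- The generator `y` of the free group of rank 2. -/
def yg : F2 := FreeGroup.of 1

/-- The exponent sum of the `i`-th generator in a word `w`. -/
def expSum (i : Fin 2) (w : F2) : ℤ :=
  Multiplicative.toAdd
    ((FreeGroup.lift fun j => Multiplicative.ofAdd (if j = i then (1 : ℤ) else 0)) w)

/-- An element is primitive if it is the image of `x` under an automorphism. -/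
def IsPrimitive (w : F2) : Prop := ∃ θ : F2 ≃* F2, θ xg = w

/-- A palindrome: the reduced word reads the same forwards and backwards. -/
def IsPalindrome (w : F2) : Prop := w.toWord.reverse = w.toWord

/-- Only positive exponents appear in the reduced word of `w`. -/
def PosWord (w : F2) : Prop := ∀ l ∈ w.toWord, l.2 = true

/-! ### Auxiliary infrastructure -/

def esHom (i : Fin 2) : F2 →* Multiplicative ℤ :=
  FreeGroup.lift fun j => Multiplicative.ofAdd (if j = i then (1 : ℤ) else 0)

lemma expSum_eq (i : Fin 2) (w : F2) : expSum i w = Multiplicative.toAdd (esHom i w) := rfl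

lemma expSum_mul (i : Fin 2) (u v : F2) : expSum i (u * v) = expSum i u + expSum i v := by
  simp [expSum_eq, map_mul, esHom]

lemma expSum_one (i : Fin 2) : expSum i 1 = 0 := by
  simp [expSum_eq, map_one]

lemma expSum_inv (i : Fin 2) (u : F2) : expSum i u⁻¹ = - expSum i u := by
  simp [expSum_eq, map_inv]

lemma expSum_of (i j : Fin 2) : expSum i (FreeGroup.of j) = if j = i then 1 else 0 := by
  simp [expSum_eq, esHom]

def comb (a b : ℤ) : F2 →* Multiplicative ℤ where
  toFun w := Multiplicative.ofAdd (a * expSum 0 w + b * expSum 1 w)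
  map_one' := by simp [expSum_one]
  map_mul' u v := by
    simp only [expSum_mul, ← ofAdd_add]
    ring_nf

lemma hom_formula (e : F2 →* Multiplicative ℤ) (w : F2) :
    Multiplicative.toAdd (e w) =
      Multiplicative.toAdd (e xg) * expSum 0 w + Multiplicative.toAdd (e yg) * expSum 1 w := by
  have he : e = comb (Multiplicative.toAdd (e xg)) (Multiplicative.toAdd (e yg)) := by
    apply FreeGroup.ext_hom
    intro j
    fin_cases j <;> simp [comb, expSum_of, xg, yg]
  conv_lhs => rw [he]
  rfl

lemma expSum_equiv (φ : F2 ≃* F2) (i : Fin 2) (w : F2) :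
    expSum i (φ w) =
      expSum i (φ xg) * expSum 0 w + expSum i (φ yg) * expSum 1 w := by
  have := hom_formula ((esHom i).comp φ.toMonoidHom) w
  simpa [expSum_eq] using this

/-! ### Nielsen automorphisms -/

def swapθ : F2 ≃* F2 := FreeGroup.freeGroupCongr (Equiv.swap 0 1)

lemma swapθ_x : swapθ xg = yg := by simp [swapθ, xg, yg]
lemma swapθ_y : swapθ yg = xg := by simp [swapθ, xg, yg]

def invHom : F2 →* F2 := FreeGroup.lift fun j => if j = 0 then xg⁻¹ else yg

def invθ : F2 ≃* F2 :=
  MonoidHom.toMulEquiv invHom invHom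
    (by apply FreeGroup.ext_hom; intro j; fin_cases j <;> simp [invHom, xg, yg])
    (by apply FreeGroup.ext_hom; intro j; fin_cases j <;> simp [invHom, xg, yg])

lemma invθ_x : invθ xg = xg⁻¹ := by simp [invθ, invHom, xg]
lemma invθ_y : invθ yg = yg := by simp [invθ, invHom, yg]

def tauHom : F2 →* F2 := FreeGroup.lift fun j => if j = 0 then xg * yg else yg
def tauHom' : F2 →* F2 := FreeGroup.lift fun j => if j = 0 then xg * yg⁻¹ else yg

def tauθ : F2 ≃* F2 :=
  MonoidHom.toMulEquiv tauHom tauHom'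
    (by apply FreeGroup.ext_hom; intro j; fin_cases j <;> simp [tauHom, tauHom', xg, yg])
    (by apply FreeGroup.ext_hom; intro j; fin_cases j <;> simp [tauHom, tauHom', xg, yg])

lemma tauθ_x : tauθ xg = xg * yg := by simp [tauθ, tauHom, xg, yg]
lemma tauθ_y : tauθ yg = yg := by simp [tauθ, tauHom, xg, yg]

/-! ### The predicate `P` and closure properties -/

def P (X Y : ℤ) : Prop := ∃ p : F2, IsPrimitive p ∧ expSum 0 p = X ∧ expSum 1 p = Y

lemma P_map (φ : F2 ≃* F2) {X Y : ℤ} (h : P X Y) :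
    P (expSum 0 (φ xg) * X + expSum 0 (φ yg) * Y)
      (expSum 1 (φ xg) * X + expSum 1 (φ yg) * Y) := by
  obtain ⟨p, ⟨θ, hθ⟩, hX, hY⟩ := h
  exact ⟨φ p, ⟨θ.trans φ, by simp [hθ]⟩, by rw [expSum_equiv, hX, hY],
    by rw [expSum_equiv, hX, hY]⟩

lemma P_swap {X Y : ℤ} (h : P X Y) : P Y X := by
  have := P_map swapθ h
  rw [swapθ_x, swapθ_y] at this
  simpa [expSum_of, xg, yg] using this

lemma P_negX {X Y : ℤ} (h : P X Y) : P (-X) Y := by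
  have := P_map invθ h
  rw [invθ_x, invθ_y] at this
  simpa [expSum_of, expSum_inv, xg, yg] using this

lemma P_addY {X Y : ℤ} (h : P X Y) : P X (X + Y) := by
  have := P_map tauθ h
  rw [tauθ_x, tauθ_y] at this
  simpa [expSum_of, expSum_mul, xg, yg] using this

lemma P_negY {X Y : ℤ} (h : P X Y) : P X (-Y) := P_swap (P_negX (P_swap h))

lemma P_subY {X Y : ℤ} (h : P X Y) : P X (Y - X) := by
  have := P_negY (P_addY (P_negY h))
  simpa [neg_add, neg_neg, sub_eq_add_neg] using this

lemma P_addX {X Y : ℤ} (h : P X Y) : P (X + Y) Y := by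
  have := P_swap (P_addY (P_swap h))
  simpa [add_comm] using this

lemma P_subX {X Y : ℤ} (h : P X Y) : P (X - Y) Y := P_swap (P_subY (P_swap h))

lemma P_one_zero : P 1 0 :=
  ⟨xg, ⟨MulEquiv.refl F2, rfl⟩, by simp [expSum_of, xg], by simp [expSum_of, xg]⟩

lemma P_of_coprime : ∀ n : ℕ, ∀ X Y : ℤ, X.natAbs + Y.natAbs ≤ n → IsCoprime X Y → P X Y := by
  intro n
  induction n with
  | zero =>
    intro X Y hn hc
    have hX : X = 0 := by omega
    have hY : Y = 0 := by omega
    subst hX; subst hY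
    exact absurd hc (by simp [Int.isCoprime_iff_gcd_eq_one])
  | succ n ih =>
    intro X Y hn hc
    by_cases hY : Y = 0
    · subst hY
      have h1 : X.natAbs = 1 := by
        have := Int.isCoprime_iff_gcd_eq_one.mp hc
        simpa [Int.gcd] using this
      rcases (by omega : X = 1 ∨ X = -1) with h | h
      · subst h; exact P_one_zero
      · subst h; simpa using P_negX P_one_zero
    by_cases hX : X = 0
    · subst hX
      have h1 : Y.natAbs = 1 := by
        have := Int.isCoprime_iff_gcd_eq_one.mp hc
        simpa [Int.gcd] using this
      rcases (by omega : Y = 1 ∨ Y = -1) with h | h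
      · subst h; exact P_swap P_one_zero
      · subst h; exact P_swap (by simpa using P_negX P_one_zero)
    by_cases hle : Y.natAbs ≤ X.natAbs
    · -- reduce X
      by_cases hred : (X - Y).natAbs < X.natAbs
      · have hc' : IsCoprime (X - Y) Y := by
          have := hc.add_mul_right_left (-1)
          simpa [mul_neg_one, ← sub_eq_add_neg] using this
        have hp := ih (X - Y) Y (by omega) hc'
        have := P_addX hp
        simpa using this
      · have hred' : (X + Y).natAbs < X.natAbs := by omega
        have hc' : IsCoprime (X + Y) Y := by simpa using hc.add_mul_right_left 1
        have hp := ih (X + Y) Y (by omega) hc'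
        have := P_subX hp
        simpa using this
    · -- reduce Y
      by_cases hred : (Y - X).natAbs < Y.natAbs
      · have hc' : IsCoprime X (Y - X) := by
          have := hc.add_mul_left_right (-1)
          simpa [mul_neg_one, ← sub_eq_add_neg] using this
        have hp := ih X (Y - X) (by omega) hc'
        have := P_addY hp
        simpa using this
      · have hred' : (Y + X).natAbs < Y.natAbs := by omega
        have hc' : IsCoprime X (Y + X) := by simpa using hc.add_mul_left_right 1
        have hp := ih X (Y + X) (by omega) hc'
        have := P_subY hp
        simpa using this

theorem exists_primitive_iff_coprime (X Y : ℤ) :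
    (∃ p : F2, IsPrimitive p ∧ expSum 0 p = X ∧ expSum 1 p = Y) ↔ Int.gcd X Y = 1 := by
  constructor
  · rintro ⟨p, ⟨θ, hθ⟩, hX, hY⟩
    rw [← Int.isCoprime_iff_gcd_eq_one]
    have key := hom_formula ((esHom 0).comp θ.symm.toMonoidHom) p
    have hp : θ.symm p = xg := by rw [← hθ]; simp
    have h1 : Multiplicative.toAdd (((esHom 0).comp θ.symm.toMonoidHom) p) = 1 := by
      simp only [MonoidHom.comp_apply, MulEquiv.coe_toMonoidHom, hp]
      have : expSum 0 xg = 1 := by simp [expSum_of, xg]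
      simpa [expSum_eq] using this
    rw [h1, hX, hY] at key
    exact ⟨Multiplicative.toAdd (((esHom 0).comp θ.symm.toMonoidHom) xg),
      Multiplicative.toAdd (((esHom 0).comp θ.symm.toMonoidHom) yg), key.symm⟩
  · intro h
    exact P_of_coprime (X.natAbs + Y.natAbs) X Y le_rfl (Int.isCoprime_iff_gcd_eq_one.mpr h)
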